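/- In a multiplicity-free semi-simple tensor system over a commutative ring R, let λ, ν ∈ I be such that ν acts one-dimensionally on the left and on the right of λ, and N_{λλ}^ν = 1. Suppose d ∈ R is a unit with d^{-2} = (F^{λλλ}_{φ^l_ν(λ)})^ν_ν (F̄^{λλλ}_{φ^l_ν(λ)})^ν_ν and also d^{-2} = (F^{λλλ}_{φ^r_ν(λ)})^ν_ν (F̄^{λλλ}_{φ^r_ν(λ)})^ν_ν. Then on the Hilbert space H_{λ̃} with λ̃ = (λ,…,λ) the operators U_i = d p_i^{(ν)} (1 ≤ i ≤ L−1) satisfy the Temperley–Lieb relations: U_i^2 = d U_i for 1 ≤ i ≤ L−1; U_i U_j = U_j U_i whenever i + 2 ≤ j ≤ L−1; and U_i U_{i±1} U_i = U_i whenever 1 ≤ i, i±1 ≤ L−1. -/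

import Mathlib

open scoped Classical

noncomputable section

/-- A multiplicity-free semi-simple tensor system over a commutative ring `R`,
with index set `I`, fusion constants `N`, and F-moves `F`, `Fbar`.
`F a b c d e f` denotes `(F^{abc}_d)^e_f` and `Fbar a b c d f e` denotes `(F̄^{abc}_d)^f_e`. -/
structure TensorSystem (R : Type*) [CommRing R] (I : Type*) where
  N : I → I → I → ℕ
  F : I → I → I → I → I → I → R
  Fbar : I → I → I → I → I → I → R
  N_le_one : ∀ a b c, N a b c ≤ 1
  N_assoc : ∀ a b c d, (∑ᶠ e, N a b e * N e c d) = ∑ᶠ e, N a e d * N b c e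
  N_finite : ∀ a b, (Function.support fun c => N a b c).Finite
  F_vanish : ∀ a b c d e f, N a b e * N b c f * N a f d * N e c d = 0 → F a b c d e f = 0
  Fbar_vanish : ∀ a b c d e f, N a b e * N b c f * N a f d * N e c d = 0 → Fbar a b c d f e = 0
  pentagon : ∀ a b c d e f g k l,
      (∑ᶠ h, F a b c g f h * F a h d e g k * F b c d k h l) = F f c d e g l * F a b l e f k
  F_Fbar : ∀ a b c d e e',
      (∑ᶠ f, F a b c d e f * Fbar a b c d f e')
        = (if e = e' then (1 : R) else 0) * (N a b e : R) * (N e c d : R)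
  Fbar_F : ∀ a b c d f f',
      (∑ᶠ e, Fbar a b c d f' e * F a b c d e f)
        = (if f = f' then (1 : R) else 0) * (N b c f : R) * (N a f d : R)

namespace TensorSystem

variable {R : Type*} [CommRing R] {I : Type*}

open Fin.NatCast

/-- `μ = (μ₀, μ₁, …, μ_L)` is a fusion path for the tuple `λ̃ = (lam 1, …, lam L)`:
`μ₀ ∈ I0` and `N_{μ_{i-1} λ_i}^{μ_i} = 1` for `1 ≤ i ≤ L`. -/
def IsPath (TS : TensorSystem R I) (L : ℕ) (I0 : Set I) (lam : ℕ → I)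
    (μ : Fin (L + 1) → I) : Prop :=
  μ 0 ∈ I0 ∧ ∀ i : ℕ, 1 ≤ i → i ≤ L →
    TS.N (μ ((i - 1 : ℕ) : Fin (L + 1))) (lam i) (μ ((i : ℕ) : Fin (L + 1))) = 1

/-- Matrix element `⟨μ'| p_i^{(ν)} |μ⟩` of the two-site projection operator. -/
def pMat (TS : TensorSystem R I) (L : ℕ) (lam : ℕ → I) (i : ℕ) (ν : I)
    (μ' μ : Fin (L + 1) → I) : R :=
  (∏ j ∈ Finset.univ.erase ((i : ℕ) : Fin (L + 1)), if μ j = μ' j then (1 : R) else 0)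
    * TS.Fbar (μ ((i - 1 : ℕ) : Fin (L + 1))) (lam i) (lam (i + 1))
        (μ ((i + 1 : ℕ) : Fin (L + 1))) ν (μ' ((i : ℕ) : Fin (L + 1)))
    * TS.F (μ ((i - 1 : ℕ) : Fin (L + 1))) (lam i) (lam (i + 1))
        (μ ((i + 1 : ℕ) : Fin (L + 1))) (μ ((i : ℕ) : Fin (L + 1))) ν

/-- Matrix elements of the composition of two operators on `H_{λ̃}`,
summing over the fusion-path basis. -/
def mulMat (TS : TensorSystem R I) (L : ℕ) (I0 : Set I) (lam : ℕ → I)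
    (A B : (Fin (L + 1) → I) → (Fin (L + 1) → I) → R)
    (μ' μ : Fin (L + 1) → I) : R :=
  ∑ᶠ μ'' ∈ {x : Fin (L + 1) → I | TS.IsPath L I0 lam x}, A μ' μ'' * B μ'' μ

/-- Two operators on `H_{λ̃}` are equal iff all their matrix elements between
fusion-path basis vectors agree. -/
def MatEqOn (TS : TensorSystem R I) (L : ℕ) (I0 : Set I) (lam : ℕ → I)
    (A B : (Fin (L + 1) → I) → (Fin (L + 1) → I) → R) : Prop :=
  ∀ μ' μ : Fin (L + 1) → I, TS.IsPath L I0 lam μ' → TS.IsPath L I0 lam μ → A μ' μ = B μ' μ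

/-- Extended fusion numbers `N_{a a₁ ⋯ aₙ}^b` along a list `[a₁, …, aₙ]`. -/
def Nseq (TS : TensorSystem R I) : I → List I → I → ℕ
  | a, [], b => if a = b then 1 else 0
  | a, c :: rest, b => ∑ᶠ x, TS.N a c x * Nseq TS x rest b

/-- `ν` acts one-dimensionally on the left of `μ`. -/
def ActsOneDimLeft (TS : TensorSystem R I) (ν μ : I) : Prop :=
  (∑ᶠ μ' : I, TS.N ν μ μ') = 1

/-- `ν` acts one-dimensionally on the right of `μ`. -/
def ActsOneDimRight (TS : TensorSystem R I) (ν μ : I) : Prop :=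
  (∑ᶠ μ' : I, TS.N μ ν μ') = 1

end TensorSystem

/-- Matrix elements of the identity operator. -/
def deltaMat {R : Type*} [CommRing R] {I : Type*} (L : ℕ)
    (μ' μ : Fin (L + 1) → I) : R :=
  ∏ j : Fin (L + 1), if μ j = μ' j then (1 : R) else 0

/-- Scalar multiple of a matrix of operator matrix elements. -/
def smulMat {R : Type*} [CommRing R] {α : Sort*} (c : R) (A : α → α → R) : α → α → R :=
  fun x y => c * A x y

/-!
In the path basis `p_i^{(ν)}` changes only the label `μ_i`, by the rank-one matrix
`F̄^ν_{μ'_i} F^{μ_i}_ν` of the F-move `F^{μ_{i-1} λ λ}_{μ_{i+1}}`. Idempotency is the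
orthogonality `F̄ F = 1`, and projections at distance at least two act on disjoint labels.
For `U_i U_{i±1} U_i` one has to sum over an intermediate label; since `λ ⊗ ν` and `ν ⊗ λ`
have the single fusion channel `φ`, the pentagon equation and its inverse rewrite each product
of two neighbouring F-moves as an F-move through `φ` times `F^{λλλ}_φ` or `F̄^{λλλ}_φ`.
Orthogonality then collapses the sum to `F^{λλλ}_φ(ν,ν) F̄^{λλλ}_φ(ν,ν) = d⁻²`, which reduces
`d³` to `d`.
-/

lemma Finset.sum_comm_pairs {α β γ δ M : Type*} [AddCommMonoid M] (s : Finset α)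
    (t : Finset β) (u : Finset γ) (v : Finset δ) (f : α → β → γ → δ → M) :
    ∑ a ∈ s, ∑ b ∈ t, ∑ c ∈ u, ∑ d ∈ v, f a b c d
      = ∑ c ∈ u, ∑ d ∈ v, ∑ a ∈ s, ∑ b ∈ t, f a b c d := by
  calc _ = ∑ a ∈ s, ∑ c ∈ u, ∑ d ∈ v, ∑ b ∈ t, f a b c d :=
        Finset.sum_congr rfl fun a _ => Finset.sum_comm.trans
          (Finset.sum_congr rfl fun c _ => Finset.sum_comm)
    _ = _ := Finset.sum_comm.trans (Finset.sum_congr rfl fun c _ => Finset.sum_comm)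

open Fin.NatCast

lemma natCast_ne_natCast {L m n : ℕ} (hm : m ≤ L) (hn : n ≤ L) (h : m ≠ n) :
    (m : Fin (L + 1)) ≠ n := by
  intro heq
  have := congrArg Fin.val heq
  simp only [Fin.val_natCast, Nat.mod_eq_of_lt (Nat.lt_succ_of_le hm),
    Nat.mod_eq_of_lt (Nat.lt_succ_of_le hn)] at this
  exact h this

lemma update_natCast_of_ne {α : Type*} {L m n : ℕ} (f : Fin (L + 1) → α) (v : α)
    (hm : m ≤ L) (hn : n ≤ L) (h : m ≠ n) : Function.update f (n : Fin (L + 1)) v m = f m :=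
  Function.update_of_ne (natCast_ne_natCast hm hn h) v f

def FixesSite {R ι α : Type*} [Zero R] (A : (ι → α) → (ι → α) → R) (k : ι) : Prop :=
  ∀ μ' μ, μ' k ≠ μ k → A μ' μ = 0

lemma FixesSite.smulMat {R ι α : Type*} [CommRing R] {A : (ι → α) → (ι → α) → R}
    {k : ι} (hA : FixesSite A k) (c : R) : FixesSite (smulMat c A) k := fun μ' μ h => by
  simp [_root_.smulMat, hA μ' μ h]

lemma eq_of_fixesSite {R ι α : Type*} [Zero R] [DecidableEq ι]
    {A B : (ι → α) → (ι → α) → R} {a b : ι}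
    (hA : ∀ k, k ≠ a → k ≠ b → FixesSite A k)
    (hB : ∀ k, k ≠ a → k ≠ b → FixesSite B k) {P : (ι → α) → Prop}
    {μ' μ : ι → α} (hμ : P μ)
    (h : ∀ s c, P (Function.update (Function.update μ' a s) b c) →
      A μ' (Function.update (Function.update μ' a s) b c)
        = B μ' (Function.update (Function.update μ' a s) b c)) :
    A μ' μ = B μ' μ := by
  by_cases hk : ∃ k, k ≠ a ∧ k ≠ b ∧ μ' k ≠ μ k
  · obtain ⟨k, ha, hb, hne⟩ := hk
    rw [hA k ha hb _ _ hne, hB k ha hb _ _ hne]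
  · push Not at hk
    have hμ_eq : Function.update (Function.update μ' a (μ a)) b (μ b) = μ := by
      funext k
      by_cases hkb : k = b
      · subst hkb; simp
      by_cases hka : k = a
      · subst hka; simp [hkb]
      simp [hka, hkb, hk k hka hkb]
    have key := h (μ a) (μ b)
    rw [hμ_eq] at key
    exact key hμ

lemma FixesSite.mulMat {R I : Type*} [CommRing R] (TS : TensorSystem R I) {L : ℕ} {I0 : Set I}
    {lam : ℕ → I} {A B : (Fin (L + 1) → I) → (Fin (L + 1) → I) → R} {k : Fin (L + 1)}
    (hA : FixesSite A k) (hB : FixesSite B k) : FixesSite (TS.mulMat L I0 lam A B) k := by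
  intro μ' μ h
  have : ∀ μ'', A μ' μ'' * B μ'' μ = 0 := fun μ'' => by
    by_cases h' : μ' k = μ'' k
    · rw [hB μ'' μ (h' ▸ h), mul_zero]
    · rw [hA μ' μ'' h', zero_mul]
  simp only [TensorSystem.mulMat, this, finsum_mem_zero]

namespace TensorSystem

variable {R : Type*} [CommRing R] {I : Type*} (TS : TensorSystem R I)

open Finset Function

lemma N_eq_zero_or_one (a b c : I) : TS.N a b c = 0 ∨ TS.N a b c = 1 := by
  have := TS.N_le_one a b c; omega

lemma F_eq_zero_of_N {a b c d e f : I}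
    (h : TS.N a b e = 0 ∨ TS.N b c f = 0 ∨ TS.N a f d = 0 ∨ TS.N e c d = 0) :
    TS.F a b c d e f = 0 :=
  TS.F_vanish a b c d e f (by rcases h with h | h | h | h <;> simp [h])

lemma Fbar_eq_zero_of_N {a b c d e f : I}
    (h : TS.N a b e = 0 ∨ TS.N b c f = 0 ∨ TS.N a f d = 0 ∨ TS.N e c d = 0) :
    TS.Fbar a b c d f e = 0 :=
  TS.Fbar_vanish a b c d e f (by rcases h with h | h | h | h <;> simp [h])

lemma N_eq_one_of_F_ne_zero {a b c d e f : I} (h : TS.F a b c d e f ≠ 0) :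
    TS.N a b e = 1 ∧ TS.N b c f = 1 ∧ TS.N a f d = 1 ∧ TS.N e c d = 1 := by
  refine ⟨?_, ?_, ?_, ?_⟩ <;> refine (TS.N_eq_zero_or_one _ _ _).resolve_left fun h0 => h ?_ <;>
    exact TS.F_eq_zero_of_N (by simp [h0])

/-- An F-move vanishes unless its four fusion multiplicities are `1`, so the factors `N` that the
orthogonality relations produce next to F-moves can be dropped. -/
lemma N_mul_eq {a b c : I} {x : R} (h : TS.N a b c = 0 → x = 0) : (TS.N a b c : R) * x = x := by
  rcases TS.N_eq_zero_or_one a b c with h0 | h1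
  · simp [h0, h h0]
  · simp [h1]

lemma finsum_eq_sum_of_N {a b : I} {s : Finset I} (hs : ∀ x, TS.N a b x ≠ 0 → x ∈ s)
    {f : I → R} (hf : ∀ x, TS.N a b x = 0 → f x = 0) : ∑ᶠ x, f x = ∑ x ∈ s, f x :=
  finsum_eq_sum_of_support_subset f fun x hx => hs x fun h0 => hx (hf x h0)

lemma hasFiniteSupport_of_N {a b : I} {f : I → R} (hf : ∀ x, TS.N a b x = 0 → f x = 0) :
    Function.HasFiniteSupport f :=
  (TS.N_finite a b).subset fun x hx => Function.mem_support.2 fun h0 => hx (hf x h0)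

lemma sum_F_mul_Fbar {b c : I} {s : Finset I} (hs : ∀ x, TS.N b c x ≠ 0 → x ∈ s)
    (a d e e' : I) :
    ∑ f ∈ s, TS.F a b c d e f * TS.Fbar a b c d f e'
      = (if e = e' then 1 else 0) * (TS.N a b e : R) * TS.N e c d := by
  rw [← TS.F_Fbar, TS.finsum_eq_sum_of_N hs fun f h0 => by simp [TS.F_eq_zero_of_N, h0]]

lemma sum_Fbar_mul_F {a b : I} {s : Finset I} (hs : ∀ x, TS.N a b x ≠ 0 → x ∈ s)
    (c d f f' : I) :
    ∑ e ∈ s, TS.Fbar a b c d f' e * TS.F a b c d e f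
      = (if f = f' then 1 else 0) * (TS.N b c f : R) * TS.N a f d := by
  rw [← TS.Fbar_F, TS.finsum_eq_sum_of_N hs fun e h0 => by simp [TS.F_eq_zero_of_N, h0]]

lemma sum_pentagon {b c : I} {s : Finset I} (hs : ∀ x, TS.N b c x ≠ 0 → x ∈ s)
    (a d e f g k l : I) :
    ∑ h ∈ s, TS.F a b c g f h * TS.F a h d e g k * TS.F b c d k h l
      = TS.F f c d e g l * TS.F a b l e f k := by
  rw [← TS.pentagon, TS.finsum_eq_sum_of_N hs fun h h0 => by simp [TS.F_eq_zero_of_N, h0]]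

theorem pentagon_invert_first (a p q r e g h k l : I) :
    ∑ᶠ y, TS.Fbar a p q g h y * (TS.F y q r e g l * TS.F a p l e y k)
      = TS.F a h r e g k * TS.F p q r k h l := by
  set Y := (TS.N_finite a p).toFinset
  set H := insert h (TS.N_finite p q).toFinset
  have hY : ∀ x, TS.N a p x ≠ 0 → x ∈ Y := fun x hx => by simp [Y, hx]
  have hH : ∀ x, TS.N p q x ≠ 0 → x ∈ H := fun x hx => by simp [H, hx]
  rw [TS.finsum_eq_sum_of_N hY fun y h0 => by simp [TS.Fbar_eq_zero_of_N, h0]]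
  calc ∑ y ∈ Y, TS.Fbar a p q g h y * (TS.F y q r e g l * TS.F a p l e y k)
      = ∑ h' ∈ H, (∑ y ∈ Y, TS.Fbar a p q g h y * TS.F a p q g y h')
          * (TS.F a h' r e g k * TS.F p q r k h' l) := by
        simp_rw [← TS.sum_pentagon hH, mul_sum, sum_mul]
        rw [sum_comm]
        exact sum_congr rfl fun _ _ => sum_congr rfl fun _ _ => by ring
    _ = (TS.N p q h : R) * (TS.N a h g * (TS.F a h r e g k * TS.F p q r k h l)) := by
        simp_rw [TS.sum_Fbar_mul_F hY]
        rw [sum_eq_single_of_mem h (mem_insert_self _ _) fun h' _ hne => by simp [hne]]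
        simp only [if_true, one_mul, mul_assoc]
    _ = TS.F a h r e g k * TS.F p q r k h l := by
        rw [TS.N_mul_eq fun h0 => by simp [TS.F_eq_zero_of_N, h0],
          TS.N_mul_eq fun h0 => by simp [TS.F_eq_zero_of_N, h0]]

theorem pentagon_invert_last (a p q r e g h k y : I) :
    ∑ᶠ l, TS.Fbar p q r k l h * (TS.F y q r e g l * TS.F a p l e y k)
      = TS.F a p q g y h * TS.F a h r e g k := by
  set Λ := (TS.N_finite q r).toFinset
  set H := insert h (TS.N_finite p q).toFinset
  have hΛ : ∀ x, TS.N q r x ≠ 0 → x ∈ Λ := fun x hx => by simp [Λ, hx]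
  have hH : ∀ x, TS.N p q x ≠ 0 → x ∈ H := fun x hx => by simp [H, hx]
  rw [TS.finsum_eq_sum_of_N hΛ fun l h0 => by simp [TS.Fbar_eq_zero_of_N, h0]]
  calc ∑ l ∈ Λ, TS.Fbar p q r k l h * (TS.F y q r e g l * TS.F a p l e y k)
      = ∑ h' ∈ H, TS.F a p q g y h' * TS.F a h' r e g k
          * ∑ l ∈ Λ, TS.F p q r k h' l * TS.Fbar p q r k l h := by
        simp_rw [← TS.sum_pentagon hH, mul_sum]
        rw [sum_comm]
        exact sum_congr rfl fun _ _ => sum_congr rfl fun _ _ => by ring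
    _ = (TS.N p q h : R) * (TS.N h r k * (TS.F a p q g y h * TS.F a h r e g k)) := by
        simp_rw [TS.sum_F_mul_Fbar hΛ]
        rw [sum_eq_single_of_mem h (mem_insert_self _ _) fun h' _ hne => by simp [hne]]
        simp only [if_true]
        ring
    _ = TS.F a p q g y h * TS.F a h r e g k := by
        rw [TS.N_mul_eq fun h0 => by simp [TS.F_eq_zero_of_N, h0],
          TS.N_mul_eq fun h0 => by simp [TS.F_eq_zero_of_N, h0]]

lemma pentagon_invert_last_two {h r q : I} {K Λ : Finset I}
    (hK : ∀ x, TS.N h r x ≠ 0 → x ∈ K) (hΛ : ∀ x, TS.N q r x ≠ 0 → x ∈ Λ)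
    (a p e g g' y : I) :
    ∑ k ∈ K, ∑ l ∈ Λ, TS.Fbar a h r e k g * TS.Fbar p q r k l h
        * (TS.F y q r e g' l * TS.F a p l e y k)
      = (if g' = g then 1 else 0) * (TS.N g' r e : R) * TS.F a p q g' y h := by
  calc _ = ∑ k ∈ K, TS.F a p q g' y h * TS.F a h r e g' k * TS.Fbar a h r e k g := by
        refine sum_congr rfl fun k _ => ?_
        rw [← TS.pentagon_invert_last,
          TS.finsum_eq_sum_of_N hΛ fun l h0 => by simp [TS.Fbar_eq_zero_of_N, h0], sum_mul]
        exact sum_congr rfl fun _ _ => by ring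
    _ = (TS.N a h g' : R) * ((if g' = g then 1 else 0) * TS.N g' r e * TS.F a p q g' y h) := by
        simp_rw [mul_assoc, ← mul_sum, TS.sum_F_mul_Fbar hK]
        ring
    _ = _ := TS.N_mul_eq fun h0 => by simp [TS.F_eq_zero_of_N, h0]

lemma sum_F_mul_F_mul_Fbar_mul_Fbar {a p q : I} {Y G : Finset I}
    (hY : ∀ x, TS.N a p x ≠ 0 → x ∈ Y)
    (hG : ∀ y ∈ Y, ∀ x, TS.N y q x ≠ 0 → x ∈ G)
    (r e k k' l l' : I) :
    ∑ y ∈ Y, ∑ g ∈ G, TS.F y q r e g l' * TS.F a p l' e y k'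
        * (TS.Fbar y q r e l g * TS.Fbar a p l e k y)
      = (if l' = l then 1 else 0) * (if k' = k then 1 else 0)
        * ((TS.N q r l : R) * TS.N p l k * TS.N a k e) := by
  have hg : ∀ y ∈ Y, ∑ g ∈ G, TS.F y q r e g l' * TS.F a p l' e y k'
        * (TS.Fbar y q r e l g * TS.Fbar a p l e k y)
      = TS.Fbar a p l e k y * TS.F a p l' e y k'
        * ((if l' = l then 1 else 0) * (TS.N q r l' : R) * TS.N y l' e) := fun y hy => by
    rw [← TS.sum_Fbar_mul_F (hG y hy), mul_sum]
    exact sum_congr rfl fun _ _ => by ring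
  rw [sum_congr rfl hg]
  by_cases hl : l' = l
  · subst hl
    calc _ = (TS.N q r l' : R) * ∑ y ∈ Y, TS.Fbar a p l' e k y * TS.F a p l' e y k' := by
          rw [mul_sum]
          refine sum_congr rfl fun y _ => ?_
          rw [if_pos rfl, one_mul, mul_comm, mul_assoc,
            TS.N_mul_eq (a := y) fun h0 => by simp [TS.F_eq_zero_of_N, h0]]
      _ = _ := by
          rw [TS.sum_Fbar_mul_F hY]
          by_cases hk : k' = k
          · subst hk; simp only [if_true]; ring
          · simp [hk]
  · simp [hl]

theorem inverse_pentagon (a p q r e g h k l : I) :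
    ∑ᶠ y, TS.F a p q g y h * (TS.Fbar y q r e l g * TS.Fbar a p l e k y)
      = TS.Fbar a h r e k g * TS.Fbar p q r k l h := by
  set Y := (TS.N_finite a p).toFinset
  set G := insert g (Y.biUnion fun y => (TS.N_finite y q).toFinset)
  set K := insert k (TS.N_finite h r).toFinset
  set Λ := insert l (TS.N_finite q r).toFinset
  have hY : ∀ x, TS.N a p x ≠ 0 → x ∈ Y := fun x hx => by simp [Y, hx]
  have hG : ∀ y ∈ Y, ∀ x, TS.N y q x ≠ 0 → x ∈ G := fun y hy x hx =>
    mem_insert_of_mem (mem_biUnion.2 ⟨y, hy, by simp [hx]⟩)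
  have hK : ∀ x, TS.N h r x ≠ 0 → x ∈ K := fun x hx => by simp [K, hx]
  have hΛ : ∀ x, TS.N q r x ≠ 0 → x ∈ Λ := fun x hx => by simp [Λ, hx]
  -- both sides are the pentagon sandwiched between the inverses of its five F-moves
  calc _ = ∑ y ∈ Y, ∑ g' ∈ G, ∑ k' ∈ K, ∑ l' ∈ Λ,
          TS.Fbar a h r e k' g * TS.Fbar p q r k' l' h * (TS.F y q r e g' l' * TS.F a p l' e y k')
            * (TS.Fbar y q r e l g' * TS.Fbar a p l e k y) := by
        rw [TS.finsum_eq_sum_of_N hY fun y h0 => by simp [TS.F_eq_zero_of_N, h0]]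
        refine sum_congr rfl fun y _ => ?_
        simp_rw [← sum_mul, TS.pentagon_invert_last_two hK hΛ]
        rw [sum_eq_single_of_mem g (mem_insert_self _ _) fun g' _ hne => by simp [hne], if_pos rfl,
          one_mul, mul_comm (TS.N g r e : R), mul_assoc,
          TS.N_mul_eq fun h0 => by simp [TS.Fbar_eq_zero_of_N, h0]]
    _ = ∑ k' ∈ K, ∑ l' ∈ Λ, TS.Fbar a h r e k' g * TS.Fbar p q r k' l' h
          * ((if l' = l then 1 else 0) * (if k' = k then 1 else 0)
            * ((TS.N q r l : R) * TS.N p l k * TS.N a k e)) := by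
        rw [sum_comm_pairs]
        refine sum_congr rfl fun k' _ => sum_congr rfl fun l' _ => ?_
        rw [← TS.sum_F_mul_F_mul_Fbar_mul_Fbar hY hG, mul_sum]
        exact sum_congr rfl fun y _ => by rw [mul_sum]; exact sum_congr rfl fun g' _ => by ring
    _ = (TS.N q r l : R) * (TS.N p l k * (TS.N a k e
          * (TS.Fbar a h r e k g * TS.Fbar p q r k l h))) := by
        rw [sum_eq_single_of_mem k (mem_insert_self _ _) fun k' _ hne => by simp [hne],
          sum_eq_single_of_mem l (mem_insert_self _ _) fun l' _ hne => by simp [hne]]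
        simp only [if_true]
        ring
    _ = _ := by
        rw [TS.N_mul_eq fun h0 => by simp [TS.Fbar_eq_zero_of_N, h0],
          TS.N_mul_eq fun h0 => by simp [TS.Fbar_eq_zero_of_N, h0],
          TS.N_mul_eq fun h0 => by simp [TS.Fbar_eq_zero_of_N, h0]]

section OneDimensional

variable {TS}

lemma actsOneDimRight_iff {ν μ : I} : TS.ActsOneDimRight ν μ ↔ TS.ActsOneDimLeft μ ν :=
  Iff.rfl

namespace ActsOneDimLeft

variable {p l k : I} (hpl : TS.ActsOneDimLeft p l) (hk : TS.N p l k = 1)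
include hpl hk

lemma eq_of_N_ne_zero {x : I} (hx : TS.N p l x ≠ 0) : x = k := by
  by_contra hne
  have hle : TS.N p l x + TS.N p l k ≤ ∑ᶠ z, TS.N p l z := by
    rw [finsum_eq_sum _ (TS.N_finite p l), ← sum_pair hne]
    refine sum_le_sum_of_subset fun z hz => ?_
    rcases mem_insert.1 hz with rfl | hz
    · simpa using hx
    · simp [mem_singleton.1 hz, hk]
  rw [hpl] at hle
  omega

lemma F_mul_Fbar_eq_ite (a e x y : I) :
    TS.F a p l e x k * TS.Fbar a p l e k y
      = (if x = y then 1 else 0) * (TS.N a p x : R) * TS.N x l e := by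
  rw [← TS.F_Fbar, finsum_eq_single _ k fun f hf => ?_]
  rw [TS.F_eq_zero_of_N (Or.inr (Or.inl ?_)), zero_mul]
  by_contra h0
  exact hf (hpl.eq_of_N_ne_zero hk h0)

lemma Fbar_mul_F_eq (a q r e g h x : I) :
    TS.Fbar a p q g h x * TS.F x q r e g l
      = TS.F a h r e g k * TS.F p q r k h l * TS.Fbar a p l e k x := by
  set Y := insert x (TS.N_finite a p).toFinset
  have hY : ∀ y, TS.N a p y ≠ 0 → y ∈ Y := fun y hy => by simp [Y, hy]
  calc TS.Fbar a p q g h x * TS.F x q r e g l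
      = (TS.N a p x : R) * (TS.N x l e * (TS.Fbar a p q g h x * TS.F x q r e g l)) := by
        rw [TS.N_mul_eq fun h0 => by simp [TS.Fbar_eq_zero_of_N, h0],
          TS.N_mul_eq fun h0 => by simp [TS.F_eq_zero_of_N, h0]]
    _ = ∑ y ∈ Y, TS.Fbar a p q g h y * TS.F y q r e g l
          * (TS.F a p l e y k * TS.Fbar a p l e k x) := by
        simp_rw [hpl.F_mul_Fbar_eq_ite hk]
        rw [sum_eq_single_of_mem x (mem_insert_self _ _) fun y _ hne => by simp [hne]]
        simp only [if_true]
        ring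
    _ = _ := by
        rw [← TS.pentagon_invert_first,
          TS.finsum_eq_sum_of_N hY fun y h0 => by simp [TS.Fbar_eq_zero_of_N, h0], sum_mul]
        exact sum_congr rfl fun _ _ => by ring

lemma F_mul_Fbar_eq (a q r e g h x : I) :
    TS.F a p q g x h * TS.Fbar x q r e l g
      = TS.Fbar a h r e k g * TS.Fbar p q r k l h * TS.F a p l e x k := by
  set Y := insert x (TS.N_finite a p).toFinset
  have hY : ∀ y, TS.N a p y ≠ 0 → y ∈ Y := fun y hy => by simp [Y, hy]
  calc TS.F a p q g x h * TS.Fbar x q r e l g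
      = (TS.N a p x : R) * (TS.N x l e * (TS.F a p q g x h * TS.Fbar x q r e l g)) := by
        rw [TS.N_mul_eq fun h0 => by simp [TS.F_eq_zero_of_N, h0],
          TS.N_mul_eq fun h0 => by simp [TS.Fbar_eq_zero_of_N, h0]]
    _ = ∑ y ∈ Y, TS.F a p q g y h * TS.Fbar y q r e l g
          * (TS.F a p l e x k * TS.Fbar a p l e k y) := by
        simp_rw [hpl.F_mul_Fbar_eq_ite hk]
        rw [sum_eq_single_of_mem x (mem_insert_self _ _) fun y _ hne => by simp [Ne.symm hne]]
        simp only [if_true]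
        ring
    _ = _ := by
        rw [← TS.inverse_pentagon,
          TS.finsum_eq_sum_of_N hY fun y h0 => by simp [TS.F_eq_zero_of_N, h0], sum_mul]
        exact sum_congr rfl fun _ _ => by ring

end ActsOneDimLeft

variable {lam0 ν φ : I} (hR : TS.ActsOneDimRight ν lam0) (hr : TS.N lam0 ν φ = 1)
include hR hr

lemma threeSite_sum_succ (hL : TS.ActsOneDimLeft ν lam0) (hl : TS.N ν lam0 φ = 1)
    (a b c c' : I) :
    ∑ᶠ x, TS.F a lam0 lam0 c' x ν * TS.Fbar x lam0 lam0 b ν c'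
        * (TS.Fbar a lam0 lam0 c ν x * TS.F x lam0 lam0 b c ν)
      = (if c = c' then 1 else 0) * (TS.N a ν c : R) * TS.N c lam0 b
        * (TS.F lam0 lam0 lam0 φ ν ν * TS.Fbar lam0 lam0 lam0 φ ν ν) := by
  rw [actsOneDimRight_iff] at hR
  set X := (TS.N_finite a lam0).toFinset
  have hX : ∀ x, TS.N a lam0 x ≠ 0 → x ∈ X := fun x hx => by simp [X, hx]
  calc _ = TS.F a ν lam0 b c φ * TS.Fbar a ν lam0 b φ c'
        * (TS.F lam0 lam0 lam0 φ ν ν * TS.Fbar lam0 lam0 lam0 φ ν ν)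
        * ∑ x ∈ X, TS.Fbar a lam0 ν b φ x * TS.F a lam0 ν b x φ := by
        rw [TS.finsum_eq_sum_of_N hX fun x h0 => by simp [TS.F_eq_zero_of_N, h0], mul_sum]
        refine sum_congr rfl fun x _ => ?_
        rw [hR.F_mul_Fbar_eq hr, hR.Fbar_mul_F_eq hr]
        ring
    _ = (TS.N lam0 ν φ : R) * (TS.N a φ b * (TS.F a ν lam0 b c φ * TS.Fbar a ν lam0 b φ c'
        * (TS.F lam0 lam0 lam0 φ ν ν * TS.Fbar lam0 lam0 lam0 φ ν ν))) := by
        rw [TS.sum_Fbar_mul_F hX, if_pos rfl]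
        ring
    _ = _ := by
        rw [TS.N_mul_eq fun h0 => by simp [TS.F_eq_zero_of_N, h0],
          TS.N_mul_eq fun h0 => by simp [TS.Fbar_eq_zero_of_N, h0], hL.F_mul_Fbar_eq_ite hl]

lemma threeSite_sum_pred (a b c c' : I) :
    ∑ᶠ x, TS.F a lam0 lam0 x c ν * TS.Fbar c lam0 lam0 b ν x
        * (TS.Fbar a lam0 lam0 x ν c' * TS.F c' lam0 lam0 b x ν)
      = (if c = c' then 1 else 0) * (TS.N a lam0 c : R) * TS.N c ν b
        * (TS.F lam0 lam0 lam0 φ ν ν * TS.Fbar lam0 lam0 lam0 φ ν ν) := by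
  rw [actsOneDimRight_iff] at hR
  set X := (TS.N_finite a ν).toFinset
  have hX : ∀ x, TS.N a ν x ≠ 0 → x ∈ X := fun x hx => by simp [X, hx]
  calc _ = TS.F a lam0 ν b c φ * TS.Fbar a lam0 ν b φ c'
        * (TS.F lam0 lam0 lam0 φ ν ν * TS.Fbar lam0 lam0 lam0 φ ν ν)
        * ∑ x ∈ X, TS.Fbar a ν lam0 b φ x * TS.F a ν lam0 b x φ := by
        rw [TS.finsum_eq_sum_of_N hX fun x h0 => by simp [TS.F_eq_zero_of_N, h0], mul_sum]
        refine sum_congr rfl fun x _ => ?_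
        rw [hR.F_mul_Fbar_eq hr, hR.Fbar_mul_F_eq hr]
        ring
    _ = (TS.N ν lam0 φ : R) * (TS.N a φ b * (TS.F a lam0 ν b c φ * TS.Fbar a lam0 ν b φ c'
        * (TS.F lam0 lam0 lam0 φ ν ν * TS.Fbar lam0 lam0 lam0 φ ν ν))) := by
        rw [TS.sum_Fbar_mul_F hX, if_pos rfl]
        ring
    _ = _ := by
        rw [TS.N_mul_eq fun h0 => by simp [TS.F_eq_zero_of_N, h0],
          TS.N_mul_eq fun h0 => by simp [TS.Fbar_eq_zero_of_N, h0], hR.F_mul_Fbar_eq_ite hr]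

end OneDimensional

section Paths

variable {L : ℕ} {I0 : Set I} {lam : ℕ → I}

lemma isPath_update {μ : Fin (L + 1) → I} (hμ : TS.IsPath L I0 lam μ) {i : ℕ} (hi : 1 ≤ i)
    (hiL : i + 1 ≤ L) {x : I} (h₁ : TS.N (μ (i - 1 : ℕ)) (lam i) x = 1)
    (h₂ : TS.N x (lam (i + 1)) (μ (i + 1 : ℕ)) = 1) :
    TS.IsPath L I0 lam (update μ (i : Fin (L + 1)) x) := by
  refine ⟨?_, fun j hj hjL => ?_⟩
  · have h0 : (0 : Fin (L + 1)) ≠ i := by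
      simpa using natCast_ne_natCast (Nat.zero_le L) (by omega : i ≤ L) (by omega : 0 ≠ i)
    rw [update_of_ne h0]
    exact hμ.1
  · rcases lt_trichotomy j i with hji | rfl | hji
    · rw [update_natCast_of_ne μ x (by omega) (by omega) (by omega),
        update_natCast_of_ne μ x hjL (by omega) (by omega)]
      exact hμ.2 j hj hjL
    · rw [update_natCast_of_ne μ x (by omega) hjL (by omega), update_self]
      exact h₁
    · rcases (by omega : j = i + 1 ∨ i + 1 < j) with rfl | hji'
      · rw [Nat.add_sub_cancel, update_self, update_natCast_of_ne μ x hjL (by omega) (by omega)]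
        exact h₂
      · rw [update_natCast_of_ne μ x (by omega) (by omega) (by omega),
          update_natCast_of_ne μ x hjL (by omega) (by omega)]
        exact hμ.2 j hj hjL

def ActsOnSite (L : ℕ) (I0 : Set I) (lam : ℕ → I)
    (A : (Fin (L + 1) → I) → (Fin (L + 1) → I) → R) (k : Fin (L + 1)) : Prop :=
  ∀ μ' μ, TS.IsPath L I0 lam μ' → A μ' μ ≠ 0 →
    TS.IsPath L I0 lam μ ∧ μ = update μ' k (μ k)

variable {TS}

lemma ActsOnSite.smulMat {A : (Fin (L + 1) → I) → (Fin (L + 1) → I) → R} {k : Fin (L + 1)}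
    (hA : TS.ActsOnSite L I0 lam A k) (c : R) : TS.ActsOnSite L I0 lam (smulMat c A) k :=
  fun μ' μ hμ' h => hA μ' μ hμ' (right_ne_zero_of_mul h)

lemma mulMat_eq_finsum_update {A B : (Fin (L + 1) → I) → (Fin (L + 1) → I) → R}
    {k : Fin (L + 1)} (hA : TS.ActsOnSite L I0 lam A k) {μ' : Fin (L + 1) → I}
    (hμ' : TS.IsPath L I0 lam μ') (μ : Fin (L + 1) → I) :
    TS.mulMat L I0 lam A B μ' μ = ∑ᶠ x, A μ' (update μ' k x) * B (update μ' k x) μ := by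
  rw [mulMat,
    ← finsum_mem_range (f := fun μ'' => A μ' μ'' * B μ'' μ) (update_injective μ' k)]
  refine finsum_mem_inter_support_eq' _ _ _ fun μ'' h => ?_
  obtain ⟨hpath, hupd⟩ := hA μ' μ'' hμ' (left_ne_zero_of_mul h)
  exact ⟨fun _ => ⟨_, hupd.symm⟩, fun _ => hpath⟩

lemma mulMat_eq_of_fixesSite {A B : (Fin (L + 1) → I) → (Fin (L + 1) → I) → R}
    {k : Fin (L + 1)} (hA : TS.ActsOnSite L I0 lam A k) (hB : FixesSite B k)
    {μ' : Fin (L + 1) → I} (hμ' : TS.IsPath L I0 lam μ') (μ : Fin (L + 1) → I) :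
    TS.mulMat L I0 lam A B μ' μ = A μ' (update μ' k (μ k)) * B (update μ' k (μ k)) μ := by
  rw [mulMat_eq_finsum_update hA hμ', finsum_eq_single _ (μ k) fun x hx => ?_]
  rw [hB _ _ (by simpa using hx), mul_zero]

lemma mulMat_mulMat_eq_finsum {A B C : (Fin (L + 1) → I) → (Fin (L + 1) → I) → R}
    {k k' : Fin (L + 1)} (hA : TS.ActsOnSite L I0 lam A k) (hB : TS.ActsOnSite L I0 lam B k')
    (hC : FixesSite C k') {μ' : Fin (L + 1) → I} (hμ' : TS.IsPath L I0 lam μ')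
    (μ : Fin (L + 1) → I) :
    TS.mulMat L I0 lam A (TS.mulMat L I0 lam B C) μ' μ
      = ∑ᶠ x, A μ' (update μ' k x) * B (update μ' k x) (update (update μ' k x) k' (μ k'))
          * C (update (update μ' k x) k' (μ k')) μ := by
  rw [mulMat_eq_finsum_update hA hμ']
  refine finsum_congr fun x => ?_
  by_cases hx : A μ' (update μ' k x) = 0
  · simp [hx]
  · rw [mulMat_eq_of_fixesSite hB hC (hA _ _ hμ' hx).1, mul_assoc]

variable (TS)

lemma pMat_eq_zero_of_ne {i : ℕ} {ν : I} {μ' μ : Fin (L + 1) → I} {j : Fin (L + 1)}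
    (hj : j ≠ i) (h : μ' j ≠ μ j) : TS.pMat L lam i ν μ' μ = 0 := by
  rw [pMat, prod_eq_zero (mem_erase.2 ⟨hj, mem_univ j⟩) (if_neg (Ne.symm h)), zero_mul,
    zero_mul]

lemma fixesSite_pMat {i : ℕ} {ν : I} {j : Fin (L + 1)} (hj : j ≠ i) :
    FixesSite (TS.pMat L lam i ν) j :=
  fun _ _ h => TS.pMat_eq_zero_of_ne hj h

lemma fixesSite_smulMat_pMat {i : ℕ} {ν : I} {k : Fin (L + 1)} (hk : k ≠ i) (c : R) :
    FixesSite (smulMat c (TS.pMat L lam i ν)) k :=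
  (TS.fixesSite_pMat hk).smulMat c

lemma pMat_update_update {i : ℕ} (hi : 1 ≤ i) (hiL : i + 1 ≤ L) (ν : I)
    (μ : Fin (L + 1) → I) (x y : I) :
    TS.pMat L lam i ν (update μ i x) (update μ i y)
      = TS.Fbar (μ (i - 1 : ℕ)) (lam i) (lam (i + 1)) (μ (i + 1 : ℕ)) ν x
        * TS.F (μ (i - 1 : ℕ)) (lam i) (lam (i + 1)) (μ (i + 1 : ℕ)) y ν := by
  rw [pMat, Finset.prod_eq_one fun j hj => by
      rw [update_of_ne (Finset.ne_of_mem_erase hj), update_of_ne (Finset.ne_of_mem_erase hj),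
        if_pos rfl],
    one_mul, update_self, update_self, update_natCast_of_ne μ y (by omega) (by omega) (by omega),
    update_natCast_of_ne μ y hiL (by omega) (by omega)]

lemma pMat_update {i : ℕ} (hi : 1 ≤ i) (hiL : i + 1 ≤ L) (ν : I) (μ : Fin (L + 1) → I)
    (y : I) :
    TS.pMat L lam i ν μ (update μ i y)
      = TS.Fbar (μ (i - 1 : ℕ)) (lam i) (lam (i + 1)) (μ (i + 1 : ℕ)) ν (μ i)
        * TS.F (μ (i - 1 : ℕ)) (lam i) (lam (i + 1)) (μ (i + 1 : ℕ)) y ν := by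
  rw [← TS.pMat_update_update hi hiL, update_eq_self]

lemma actsOnSite_pMat {i : ℕ} (hi : 1 ≤ i) (hiL : i + 1 ≤ L) (ν : I) :
    TS.ActsOnSite L I0 lam (TS.pMat L lam i ν) i := by
  intro μ' μ hμ' h
  have hμ : μ = update μ' i (μ i) := by
    funext j
    by_cases hj : j = i
    · subst hj; rw [update_self]
    · rw [update_of_ne hj]
      by_contra hne
      exact h (TS.pMat_eq_zero_of_ne hj (Ne.symm hne))
  refine ⟨?_, hμ⟩
  rw [hμ, TS.pMat_update hi hiL] at h
  obtain ⟨h₁, -, -, h₂⟩ := TS.N_eq_one_of_F_ne_zero (right_ne_zero_of_mul h)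
  rw [hμ]
  exact TS.isPath_update hμ' hi hiL h₁ h₂

end Paths

section Relations

variable {L : ℕ} {I0 : Set I}

section GeneralLabels

variable {lam : ℕ → I}

theorem mulMat_smulMat_pMat_self {i : ℕ} (hi : 1 ≤ i) (hiL : i + 1 ≤ L) (ν : I) (e : R) :
    TS.MatEqOn L I0 lam
      (TS.mulMat L I0 lam (smulMat e (TS.pMat L lam i ν)) (smulMat e (TS.pMat L lam i ν)))
      (smulMat e (smulMat e (TS.pMat L lam i ν))) := by
  intro μ' μ hμ' hμ
  refine eq_of_fixesSite (a := (i : Fin (L + 1))) (b := (i : Fin (L + 1)))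
    (fun k hk _ => (TS.fixesSite_smulMat_pMat hk e).mulMat TS (TS.fixesSite_smulMat_pMat hk e))
    (fun k hk _ => (TS.fixesSite_smulMat_pMat hk e).smulMat e) hμ fun s c _ => ?_
  rw [update_idem, mulMat_eq_finsum_update ((TS.actsOnSite_pMat hi hiL ν).smulMat e) hμ']
  simp only [smulMat, TS.pMat_update hi hiL, TS.pMat_update_update hi hiL]
  set a := μ' (i - 1 : ℕ)
  set b := μ' (i + 1 : ℕ)
  set l₁ := lam i
  set l₂ := lam (i + 1)
  calc ∑ᶠ x, e * (TS.Fbar a l₁ l₂ b ν (μ' i) * TS.F a l₁ l₂ b x ν)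
        * (e * (TS.Fbar a l₁ l₂ b ν x * TS.F a l₁ l₂ b c ν))
      = e * e * TS.Fbar a l₁ l₂ b ν (μ' i) * TS.F a l₁ l₂ b c ν
          * ∑ᶠ x, TS.Fbar a l₁ l₂ b ν x * TS.F a l₁ l₂ b x ν := by
        rw [mul_finsum' _ _ (TS.hasFiniteSupport_of_N (a := a) (b := l₁) fun x h0 => by
          simp [TS.Fbar_eq_zero_of_N, h0])]
        exact finsum_congr fun x => by ring
    _ = (TS.N l₁ l₂ ν : R) * (TS.N a ν b
          * (e * (e * (TS.Fbar a l₁ l₂ b ν (μ' i) * TS.F a l₁ l₂ b c ν)))) := by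
        rw [TS.Fbar_F, if_pos rfl]
        ring
    _ = _ := by
        rw [TS.N_mul_eq fun h0 => by simp [TS.F_eq_zero_of_N, h0],
          TS.N_mul_eq fun h0 => by simp [TS.F_eq_zero_of_N, h0]]

theorem mulMat_smulMat_pMat_comm {i j : ℕ} (hi : 1 ≤ i) (hij : i + 2 ≤ j) (hjL : j + 1 ≤ L)
    (ν : I) (e : R) :
    TS.MatEqOn L I0 lam
      (TS.mulMat L I0 lam (smulMat e (TS.pMat L lam i ν)) (smulMat e (TS.pMat L lam j ν)))
      (TS.mulMat L I0 lam (smulMat e (TS.pMat L lam j ν)) (smulMat e (TS.pMat L lam i ν))) := by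
  intro μ' μ hμ' hμ
  have hij' : (i : Fin (L + 1)) ≠ j := natCast_ne_natCast (by omega) (by omega) (by omega)
  refine eq_of_fixesSite (a := (i : Fin (L + 1))) (b := (j : Fin (L + 1)))
    (fun k hk hk' => (TS.fixesSite_smulMat_pMat hk e).mulMat TS (TS.fixesSite_smulMat_pMat hk' e))
    (fun k hk hk' => (TS.fixesSite_smulMat_pMat hk' e).mulMat TS (TS.fixesSite_smulMat_pMat hk e))
    hμ fun s c _ => ?_
  rw [mulMat_eq_of_fixesSite ((TS.actsOnSite_pMat hi (by omega) ν).smulMat e)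
      (TS.fixesSite_smulMat_pMat hij' e) hμ',
    mulMat_eq_of_fixesSite ((TS.actsOnSite_pMat (by omega) hjL ν).smulMat e)
      (TS.fixesSite_smulMat_pMat hij'.symm e) hμ']
  conv_rhs => rw [update_comm hij']
  simp (disch := omega) only [smulMat, update_self, update_natCast_of_ne,
    TS.pMat_update hi (by omega : i + 1 ≤ L), TS.pMat_update (by omega : 1 ≤ j) hjL]
  ring

end GeneralLabels

section HomogeneousChain

variable {TS} {lam0 ν φ : I} (hR : TS.ActsOneDimRight ν lam0) (hr : TS.N lam0 ν φ = 1)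
  {e : R} (he : e ^ 2 * (TS.F lam0 lam0 lam0 φ ν ν * TS.Fbar lam0 lam0 lam0 φ ν ν) = 1)
include hR hr he

theorem mulMat_smulMat_pMat_succ (hL : TS.ActsOneDimLeft ν lam0) (hl : TS.N ν lam0 φ = 1)
    {i : ℕ} (hi : 1 ≤ i) (hiL : i + 2 ≤ L) :
    TS.MatEqOn L I0 (fun _ => lam0)
      (TS.mulMat L I0 (fun _ => lam0) (smulMat e (TS.pMat L (fun _ => lam0) i ν))
        (TS.mulMat L I0 (fun _ => lam0) (smulMat e (TS.pMat L (fun _ => lam0) (i + 1) ν))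
          (smulMat e (TS.pMat L (fun _ => lam0) i ν))))
      (smulMat e (TS.pMat L (fun _ => lam0) i ν)) := by
  intro μ' μ hμ' hμ
  have hii : ((i + 1 : ℕ) : Fin (L + 1)) ≠ i :=
    natCast_ne_natCast (by omega) (by omega) (by omega)
  refine eq_of_fixesSite (a := (i : Fin (L + 1))) (b := ((i + 1 : ℕ) : Fin (L + 1)))
    (fun k hk hk' => (TS.fixesSite_smulMat_pMat hk e).mulMat TS
      ((TS.fixesSite_smulMat_pMat hk' e).mulMat TS (TS.fixesSite_smulMat_pMat hk e)))
    (fun k hk _ => TS.fixesSite_smulMat_pMat hk e) hμ fun s c hpath => ?_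
  rw [mulMat_mulMat_eq_finsum ((TS.actsOnSite_pMat hi (by omega) ν).smulMat e)
    ((TS.actsOnSite_pMat (by omega) (by omega) ν).smulMat e) (TS.fixesSite_smulMat_pMat hii e)
    hμ']
  have hb := hpath.2 (i + 1 + 1) (by omega) hiL
  simp (disch := omega) only [Nat.add_sub_cancel, update_self, update_natCast_of_ne] at hb
  simp (disch := omega) only [smulMat, update_self, update_natCast_of_ne, Nat.add_sub_cancel,
    TS.pMat_update hi (by omega : i + 1 ≤ L),
    TS.pMat_update (by omega : 1 ≤ i + 1) (by omega : i + 1 + 1 ≤ L)]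
  simp (disch := omega) only [update_comm hii.symm, update_self, update_natCast_of_ne,
    TS.pMat_update_update hi (by omega : i + 1 ≤ L)]
  set a := μ' (i - 1 : ℕ)
  set c' := μ' (i + 1 : ℕ)
  set b := μ' (i + 1 + 1 : ℕ)
  calc _ = e ^ 3 * (TS.Fbar a lam0 lam0 c' ν (μ' i) * TS.F a lam0 lam0 c s ν)
        * ∑ᶠ x, TS.F a lam0 lam0 c' x ν * TS.Fbar x lam0 lam0 b ν c'
          * (TS.Fbar a lam0 lam0 c ν x * TS.F x lam0 lam0 b c ν) := by
        rw [mul_finsum' _ _ (TS.hasFiniteSupport_of_N (a := a) (b := lam0) fun x h0 => by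
          simp [TS.F_eq_zero_of_N, h0])]
        exact finsum_congr fun x => by ring
    _ = (if c = c' then 1 else 0) * ((TS.N a ν c : R) * (e ^ 2
          * (TS.F lam0 lam0 lam0 φ ν ν * TS.Fbar lam0 lam0 lam0 φ ν ν)
          * (e * (TS.Fbar a lam0 lam0 c' ν (μ' i) * TS.F a lam0 lam0 c s ν)))) := by
        rw [threeSite_sum_succ hR hr hL hl, hb]
        push_cast
        ring
    _ = _ := by
        rw [he, one_mul, TS.N_mul_eq fun h0 => by simp [TS.F_eq_zero_of_N, h0]]
        by_cases hc : c = c'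
        · rw [if_pos hc, one_mul, hc, update_eq_self, TS.pMat_update hi (by omega)]
        · rw [if_neg hc, zero_mul, TS.pMat_eq_zero_of_ne hii, mul_zero]
          rw [update_natCast_of_ne _ _ (by omega) (by omega) (by omega), update_self]
          exact Ne.symm hc

theorem mulMat_smulMat_pMat_pred {i : ℕ} (hi : 2 ≤ i) (hiL : i + 1 ≤ L) :
    TS.MatEqOn L I0 (fun _ => lam0)
      (TS.mulMat L I0 (fun _ => lam0) (smulMat e (TS.pMat L (fun _ => lam0) i ν))
        (TS.mulMat L I0 (fun _ => lam0) (smulMat e (TS.pMat L (fun _ => lam0) (i - 1) ν))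
          (smulMat e (TS.pMat L (fun _ => lam0) i ν))))
      (smulMat e (TS.pMat L (fun _ => lam0) i ν)) := by
  intro μ' μ hμ' hμ
  have hii : ((i - 1 : ℕ) : Fin (L + 1)) ≠ i :=
    natCast_ne_natCast (by omega) (by omega) (by omega)
  refine eq_of_fixesSite (a := (i : Fin (L + 1))) (b := ((i - 1 : ℕ) : Fin (L + 1)))
    (fun k hk hk' => (TS.fixesSite_smulMat_pMat hk e).mulMat TS
      ((TS.fixesSite_smulMat_pMat hk' e).mulMat TS (TS.fixesSite_smulMat_pMat hk e)))
    (fun k hk _ => TS.fixesSite_smulMat_pMat hk e) hμ fun s c hpath => ?_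
  rw [mulMat_mulMat_eq_finsum ((TS.actsOnSite_pMat (by omega) hiL ν).smulMat e)
    ((TS.actsOnSite_pMat (by omega) (by omega) ν).smulMat e) (TS.fixesSite_smulMat_pMat hii e)
    hμ']
  have ha := hpath.2 (i - 1) (by omega) (by omega)
  simp (disch := omega) only [update_self, update_natCast_of_ne] at ha
  simp (disch := omega) only [smulMat, update_self, update_natCast_of_ne, Nat.sub_add_cancel,
    TS.pMat_update (by omega : 1 ≤ i) hiL,
    TS.pMat_update (by omega : 1 ≤ i - 1) (by omega : i - 1 + 1 ≤ L)]
  simp (disch := omega) only [update_comm hii.symm, TS.pMat_update_update (by omega : 1 ≤ i) hiL,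
    update_self, update_natCast_of_ne]
  set a := μ' (i - 1 - 1 : ℕ)
  set c' := μ' (i - 1 : ℕ)
  set b := μ' (i + 1 : ℕ)
  calc _ = e ^ 3 * (TS.Fbar c' lam0 lam0 b ν (μ' i) * TS.F c lam0 lam0 b s ν)
        * ∑ᶠ x, TS.F a lam0 lam0 x c ν * TS.Fbar c lam0 lam0 b ν x
          * (TS.Fbar a lam0 lam0 x ν c' * TS.F c' lam0 lam0 b x ν) := by
        rw [mul_finsum' _ _ (TS.hasFiniteSupport_of_N (a := a) (b := ν) fun x h0 => by
          simp [TS.F_eq_zero_of_N, h0])]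
        exact finsum_congr fun x => by ring
    _ = (if c = c' then 1 else 0) * ((TS.N c ν b : R) * (e ^ 2
          * (TS.F lam0 lam0 lam0 φ ν ν * TS.Fbar lam0 lam0 lam0 φ ν ν)
          * (e * (TS.Fbar c' lam0 lam0 b ν (μ' i) * TS.F c lam0 lam0 b s ν)))) := by
        rw [threeSite_sum_pred hR hr, ha]
        push_cast
        ring
    _ = _ := by
        rw [he, one_mul, TS.N_mul_eq fun h0 => by simp [TS.F_eq_zero_of_N, h0]]
        by_cases hc : c = c'
        · rw [if_pos hc, one_mul, hc, update_eq_self, TS.pMat_update (by omega) hiL]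
        · rw [if_neg hc, zero_mul, TS.pMat_eq_zero_of_ne hii, mul_zero]
          rw [update_natCast_of_ne _ _ (by omega) (by omega) (by omega), update_self]
          exact Ne.symm hc

end HomogeneousChain

end Relations

end TensorSystem

theorem temperley_lieb_relations_general
    {R : Type*} [CommRing R] {I : Type*}
    (TS : TensorSystem R I) (lam0 ν : I)
    (honeL : TS.ActsOneDimLeft ν lam0) (honeR : TS.ActsOneDimRight ν lam0)
    (φr : I)
    (d : Rˣ)
    (hd2 : ((d⁻¹ : Rˣ) : R) ^ 2
      = TS.F lam0 lam0 lam0 φr ν ν * TS.Fbar lam0 lam0 lam0 φr ν ν)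
    (L : ℕ) (I0 : Set I) :
    (∀ i : ℕ, 1 ≤ i → i + 1 ≤ L →
      TS.MatEqOn L I0 (fun _ => lam0)
      (TS.mulMat L I0 (fun _ => lam0)
      (smulMat ((d : Rˣ) : R) (TS.pMat L (fun _ => lam0) (i) ν))
      (smulMat ((d : Rˣ) : R) (TS.pMat L (fun _ => lam0) (i) ν)))
      (smulMat ((d : Rˣ) : R) (smulMat ((d : Rˣ) : R) (TS.pMat L (fun _ => lam0) (i) ν))))
    ∧ (∀ i j : ℕ, 1 ≤ i → i + 2 ≤ j → j + 1 ≤ L →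
      TS.MatEqOn L I0 (fun _ => lam0)
      (TS.mulMat L I0 (fun _ => lam0)
      (smulMat ((d : Rˣ) : R) (TS.pMat L (fun _ => lam0) (i) ν))
      (smulMat ((d : Rˣ) : R) (TS.pMat L (fun _ => lam0) (j) ν)))
      (TS.mulMat L I0 (fun _ => lam0)
      (smulMat ((d : Rˣ) : R) (TS.pMat L (fun _ => lam0) (j) ν))
      (smulMat ((d : Rˣ) : R) (TS.pMat L (fun _ => lam0) (i) ν))))
    ∧ (∀ i : ℕ, 1 ≤ i → i + 2 ≤ L →
      TS.MatEqOn L I0 (fun _ => lam0)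
      (TS.mulMat L I0 (fun _ => lam0)
      (smulMat ((d : Rˣ) : R) (TS.pMat L (fun _ => lam0) (i) ν))
      (TS.mulMat L I0 (fun _ => lam0)
      (smulMat ((d : Rˣ) : R) (TS.pMat L (fun _ => lam0) (i + 1) ν))
      (smulMat ((d : Rˣ) : R) (TS.pMat L (fun _ => lam0) (i) ν))))
      (smulMat ((d : Rˣ) : R) (TS.pMat L (fun _ => lam0) (i) ν)))
    ∧ (∀ i : ℕ, 2 ≤ i → i + 1 ≤ L →
      TS.MatEqOn L I0 (fun _ => lam0)
      (TS.mulMat L I0 (fun _ => lam0)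
      (smulMat ((d : Rˣ) : R) (TS.pMat L (fun _ => lam0) (i) ν))
      (TS.mulMat L I0 (fun _ => lam0)
      (smulMat ((d : Rˣ) : R) (TS.pMat L (fun _ => lam0) (i - 1) ν))
      (smulMat ((d : Rˣ) : R) (TS.pMat L (fun _ => lam0) (i) ν))))
      (smulMat ((d : Rˣ) : R) (TS.pMat L (fun _ => lam0) (i) ν))) := by
  rcases subsingleton_or_nontrivial R with _ | _
  · refine ⟨?_, ?_, ?_, ?_⟩ <;> intros <;> intro _ _ _ _ <;> exact Subsingleton.elim _ _
  have hd : ((d : Rˣ) : R) ^ 2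
      * (TS.F lam0 lam0 lam0 φr ν ν * TS.Fbar lam0 lam0 lam0 φr ν ν) = 1 := by
    rw [← hd2, ← mul_pow, Units.mul_inv, one_pow]
  have hF : TS.F lam0 lam0 lam0 φr ν ν ≠ 0 := fun h0 => by simp [h0] at hd
  obtain ⟨-, -, hr, hl⟩ := TS.N_eq_one_of_F_ne_zero hF
  exact ⟨fun i hi hiL => TS.mulMat_smulMat_pMat_self hi hiL ν _,
    fun i j hi hij hjL => TS.mulMat_smulMat_pMat_comm hi hij hjL ν _,
    fun i hi hiL => TS.mulMat_smulMat_pMat_succ honeR hr hd honeL hl hi hiL,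
    fun i hi hiL => TS.mulMat_smulMat_pMat_pred honeR hr hd hi hiL⟩

/-- Temperley–Lieb relations for `U_i = d p_i^{(ν)}` on the
homogeneous chain `λ̃ = (λ, …, λ)` when `ν` acts one-dimensionally on `λ`. -/
theorem temperley_lieb_relations
    {R : Type*} [CommRing R] {I : Type*}
    (TS : TensorSystem R I) (lam0 ν : I)
    (honeL : TS.ActsOneDimLeft ν lam0) (honeR : TS.ActsOneDimRight ν lam0)
    (hN : TS.N lam0 lam0 ν = 1)
    (φl φr : I) (hφl : TS.N ν lam0 φl = 1) (hφr : TS.N lam0 ν φr = 1)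
    (d : Rˣ)
    (hd1 : ((d⁻¹ : Rˣ) : R) ^ 2
      = TS.F lam0 lam0 lam0 φl ν ν * TS.Fbar lam0 lam0 lam0 φl ν ν)
    (hd2 : ((d⁻¹ : Rˣ) : R) ^ 2
      = TS.F lam0 lam0 lam0 φr ν ν * TS.Fbar lam0 lam0 lam0 φr ν ν)
    (L : ℕ) (I0 : Set I) (hI0 : I0.Finite) :
    (∀ i : ℕ, 1 ≤ i → i + 1 ≤ L →
      TS.MatEqOn L I0 (fun _ => lam0)
      (TS.mulMat L I0 (fun _ => lam0)
      (smulMat ((d : Rˣ) : R) (TS.pMat L (fun _ => lam0) (i) ν))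
      (smulMat ((d : Rˣ) : R) (TS.pMat L (fun _ => lam0) (i) ν)))
      (smulMat ((d : Rˣ) : R) (smulMat ((d : Rˣ) : R) (TS.pMat L (fun _ => lam0) (i) ν))))
    ∧ (∀ i j : ℕ, 1 ≤ i → i + 2 ≤ j → j + 1 ≤ L →
      TS.MatEqOn L I0 (fun _ => lam0)
      (TS.mulMat L I0 (fun _ => lam0)
      (smulMat ((d : Rˣ) : R) (TS.pMat L (fun _ => lam0) (i) ν))
      (smulMat ((d : Rˣ) : R) (TS.pMat L (fun _ => lam0) (j) ν)))
      (TS.mulMat L I0 (fun _ => lam0)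
      (smulMat ((d : Rˣ) : R) (TS.pMat L (fun _ => lam0) (j) ν))
      (smulMat ((d : Rˣ) : R) (TS.pMat L (fun _ => lam0) (i) ν))))
    ∧ (∀ i : ℕ, 1 ≤ i → i + 2 ≤ L →
      TS.MatEqOn L I0 (fun _ => lam0)
      (TS.mulMat L I0 (fun _ => lam0)
      (smulMat ((d : Rˣ) : R) (TS.pMat L (fun _ => lam0) (i) ν))
      (TS.mulMat L I0 (fun _ => lam0)
      (smulMat ((d : Rˣ) : R) (TS.pMat L (fun _ => lam0) (i + 1) ν))
      (smulMat ((d : Rˣ) : R) (TS.pMat L (fun _ => lam0) (i) ν))))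
      (smulMat ((d : Rˣ) : R) (TS.pMat L (fun _ => lam0) (i) ν)))
    ∧ (∀ i : ℕ, 2 ≤ i → i + 1 ≤ L →
      TS.MatEqOn L I0 (fun _ => lam0)
      (TS.mulMat L I0 (fun _ => lam0)
      (smulMat ((d : Rˣ) : R) (TS.pMat L (fun _ => lam0) (i) ν))
      (TS.mulMat L I0 (fun _ => lam0)
      (smulMat ((d : Rˣ) : R) (TS.pMat L (fun _ => lam0) (i - 1) ν))
      (smulMat ((d : Rˣ) : R) (TS.pMat L (fun _ => lam0) (i) ν))))
      (smulMat ((d : Rˣ) : R) (TS.pMat L (fun _ => lam0) (i) ν))) :=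
  temperley_lieb_relations_general TS lam0 ν honeL honeR φr d hd2 L I0
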